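/- Let G be a bridgeless graph with d(G)=4 and let uv be an edge with l_G(uv) = g*(G) ≥ 6. If B ≠ B_1, then K'_1 = ∅. -/

import Mathlib

/-- A multigraph: vertices `V`, edges `E`, each edge has two distinct endpoints. -/
structure Multigraph (V : Type*) (E : Type*) where
  ends : E → Sym2 V
  loopless : ∀ e, ¬ (ends e).IsDiag

namespace Multigraph

variable {V E : Type*}

/-- Adjacency in a multigraph: some edge joins `x` and `y`. -/
def Adjm (G : Multigraph V E) (x y : V) : Prop := ∃ e, G.ends e = s(x, y)

/-- The underlying simple graph of a multigraph. -/
def toSimple (G : Multigraph V E) : SimpleGraph V where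
  Adj x y := x ≠ y ∧ G.Adjm x y
  symm := by
    constructor
    rintro x y ⟨hne, e, he⟩
    exact ⟨hne.symm, e, he.trans (Sym2.eq_swap)⟩
  loopless := by constructor; rintro x ⟨hne, -⟩; exact hne rfl

/-- Distance between two vertices (length of a shortest path). -/
noncomputable def dist (G : Multigraph V E) (x y : V) : ℕ := G.toSimple.dist x y

/-- The diameter of a multigraph. -/
noncomputable def diam (G : Multigraph V E) : ℕ := sSup {n | ∃ x y, G.dist x y = n}

/-- The multigraph obtained by deleting the edge `e₀`. -/
def deleteEdge (G : Multigraph V E) (e₀ : E) : Multigraph V {e : E // e ≠ e₀} where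
  ends e := G.ends e.1
  loopless e := G.loopless e.1

/-- A (connected) multigraph is bridgeless if deleting any single edge leaves it connected. -/
def Bridgeless (G : Multigraph V E) : Prop :=
  ∀ e : E, ((G.deleteEdge e).toSimple).Connected

/-- Walks in a multigraph, recording the edges used. -/
inductive Walk (G : Multigraph V E) : V → V → Type _
  | nil {v : V} : Walk G v v
  | cons {x y z : V} (e : E) (he : G.ends e = s(x, y)) (p : Walk G y z) : Walk G x z

namespace Walk

variable {G : Multigraph V E}

/-- The length (number of edges) of a walk. -/
def length : ∀ {x y : V}, G.Walk x y → ℕ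
  | _, _, .nil => 0
  | _, _, .cons _ _ p => p.length + 1

/-- The list of edges of a walk. -/
def edges : ∀ {x y : V}, G.Walk x y → List E
  | _, _, .nil => []
  | _, _, .cons e _ p => e :: p.edges

/-- The list of vertices of a walk. -/
def support : ∀ {x y : V}, G.Walk x y → List V
  | x, _, .nil => [x]
  | x, _, .cons _ _ p => x :: p.support

/-- A closed walk is a cycle if its edges are distinct and its vertices
(other than the repeated base point) are distinct. -/
def IsCycle {v : V} (p : G.Walk v v) : Prop :=
  p.edges.Nodup ∧ p.support.tail.Nodup ∧ 0 < p.length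

end Walk

/-- The edge girth of `e`: the length of a shortest cycle containing `e`. -/
noncomputable def edgeGirth (G : Multigraph V E) (e : E) : ℕ :=
  sInf {n | ∃ (v : V) (p : G.Walk v v), p.IsCycle ∧ e ∈ p.edges ∧ p.length = n}

/-- The maximum edge girth `g*(G)`. -/
noncomputable def maxEdgeGirth (G : Multigraph V E) : ℕ :=
  sSup (Set.range fun e => G.edgeGirth e)

/-- An orientation of a multigraph: each edge is assigned a direction. -/
structure Orientation (G : Multigraph V E) where
  dir : E → V × V
  compat : ∀ e, s((dir e).1, (dir e).2) = G.ends e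

/-- Arcs of an orientation. -/
def Orientation.DAdj {G : Multigraph V E} (o : G.Orientation) (x y : V) : Prop :=
  ∃ e, o.dir e = (x, y)

/-- Directed distance in an orientation (`⊤` if unreachable). -/
noncomputable def Orientation.ddist {G : Multigraph V E} (o : G.Orientation) (x y : V) : ℕ∞ :=
  sInf {n : ℕ∞ | ∃ l : List V, List.Chain o.DAdj x l ∧
    (x :: l).getLast (List.cons_ne_nil x l) = y ∧ (l.length : ℕ∞) = n}

/-- An orientation is strong if every vertex is reachable from every vertex by a directed path. -/
def Orientation.IsStrong {G : Multigraph V E} (o : G.Orientation) : Prop :=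
  ∀ x y : V, o.ddist x y ≠ ⊤

/-- The diameter of an orientation. -/
noncomputable def Orientation.odiam {G : Multigraph V E} (o : G.Orientation) : ℕ∞ :=
  ⨆ (x : V) (y : V), o.ddist x y

end Multigraph

namespace Multigraph

variable {V E : Type*}

/-- `S G u v i j` is the set of vertices at distance `i` from `u` and `j` from `v`. -/
noncomputable def S (G : Multigraph V E) (u v : V) (i j : ℕ) : Set V :=
  {w | G.dist w u = i ∧ G.dist w v = j}

/-- The neighbourhood of a vertex. -/
def nbhd (G : Multigraph V E) (w : V) : Set V := {x | G.Adjm w x}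

end Multigraph

namespace Multigraph

variable {V E : Type*} (G : Multigraph V E) (u v : V)

/-- `A' = {w ∈ S₁₂ : N(w) ⊆ S₁₂ ∪ {u}}`. -/
noncomputable def setA' : Set V := {w ∈ G.S u v 1 2 | G.nbhd w ⊆ G.S u v 1 2 ∪ {u}}
/-- `A = S₁₂ − A'`. -/
noncomputable def setA : Set V := G.S u v 1 2 \ G.setA' u v
/-- `B' = {w ∈ S₂₁ : N(w) ⊆ S₂₁ ∪ {v}}`. -/
noncomputable def setB' : Set V := {w ∈ G.S u v 2 1 | G.nbhd w ⊆ G.S u v 2 1 ∪ {v}}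
/-- `B = S₂₁ − B'`. -/
noncomputable def setB : Set V := G.S u v 2 1 \ G.setB' u v
/-- `I' = {w ∈ S₂₃ : N(w) ⊆ S₂₃ ∪ A}`. -/
noncomputable def setI' : Set V := {w ∈ G.S u v 2 3 | G.nbhd w ⊆ G.S u v 2 3 ∪ G.setA u v}
/-- `I = S₂₃ − I'`. -/
noncomputable def setI : Set V := G.S u v 2 3 \ G.setI' u v
/-- `J' = {w ∈ S₃₂ : N(w) ⊆ S₃₂ ∪ B}`. -/
noncomputable def setJ' : Set V := {w ∈ G.S u v 3 2 | G.nbhd w ⊆ G.S u v 3 2 ∪ G.setB u v}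
/-- `J = S₃₂ − J'`. -/
noncomputable def setJ : Set V := G.S u v 3 2 \ G.setJ' u v
/-- `K' = {w ∈ S₃₄ : N(w) ⊆ S₃₄ ∪ I}`. -/
noncomputable def setK' : Set V := {w ∈ G.S u v 3 4 | G.nbhd w ⊆ G.S u v 3 4 ∪ G.setI u v}
/-- `K = S₃₄ − K'`. -/
noncomputable def setK : Set V := G.S u v 3 4 \ G.setK' u v
/-- `L' = {w ∈ S₄₃ : N(w) ⊆ S₄₃ ∪ J}`. -/
noncomputable def setL' : Set V := {w ∈ G.S u v 4 3 | G.nbhd w ⊆ G.S u v 4 3 ∪ G.setJ u v}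
/-- `L = S₄₃ − L'`. -/
noncomputable def setL : Set V := G.S u v 4 3 \ G.setL' u v
/-- `M' = {w ∈ S₄₄ : exactly one edge of G joins w to S₃₃ ∪ K ∪ L}`. -/
noncomputable def setM' : Set V :=
  {w ∈ G.S u v 4 4 |
    ∃! e : E, ∃ x ∈ G.S u v 3 3 ∪ G.setK u v ∪ G.setL u v, G.ends e = s(w, x)}
/-- `M = S₄₄ − M'`. -/
noncomputable def setM : Set V := G.S u v 4 4 \ G.setM' u v

end Multigraph

namespace Multigraph

variable {V E : Type*} (G : Multigraph V E) (u v : V)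

/-- `I₁ = I ∩ N(J)`. -/
noncomputable def setI1 : Set V := G.setI u v ∩ {w | ∃ x ∈ G.setJ u v, G.Adjm w x}
/-- `J₁ = J ∩ N(I)`. -/
noncomputable def setJ1 : Set V := G.setJ u v ∩ {w | ∃ x ∈ G.setI u v, G.Adjm w x}
/-- `B₁ = B ∩ N(J₁)`. -/
noncomputable def setB1 : Set V := G.setB u v ∩ {w | ∃ x ∈ G.setJ1 u v, G.Adjm w x}
/-- `K₁ = K ∩ N(S₃₃ ∪ L)`. -/
noncomputable def setK1 : Set V :=
  G.setK u v ∩ {w | ∃ x ∈ G.S u v 3 3 ∪ G.setL u v, G.Adjm w x}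
/-- `K₂ = K − K₁`. -/
noncomputable def setK2 : Set V := G.setK u v \ G.setK1 u v

/-- The distance from a vertex to a set of vertices. -/
noncomputable def distSet (w : V) (X : Set V) : ℕ := sInf {n | ∃ x ∈ X, G.dist w x = n}

/-- `K'₁` consists of those `w ∈ K'` with `d(w, B) = 4` such that every shortest path
`w i₁ i₂ i₃ i₄` from `w` to a vertex `i₄ ∈ B` satisfies `i₁ ∈ K₂`, `i₂ ∈ I₁`, `i₃ ∈ J₁`. -/
noncomputable def setK'1 : Set V :=
  {w ∈ G.setK' u v | G.distSet w (G.setB u v) = 4 ∧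
    ∀ i1 i2 i3 i4 : V, i4 ∈ G.setB u v →
      G.Adjm w i1 → G.Adjm i1 i2 → G.Adjm i2 i3 → G.Adjm i3 i4 →
      i1 ∈ G.setK2 u v ∧ i2 ∈ G.setI1 u v ∧ i3 ∈ G.setJ1 u v}

end Multigraph

/-! A vertex `b ∈ B \ B₁` is at distance exactly `4` from any `w ∈ K'₁`, since `d(w, B) = 4` and
`d(G) = 4`. The third inner vertex of a shortest `w`–`b` path then lies in `J₁` by the definition
of `K'₁`, which puts `b` in `B₁`. -/

namespace Multigraph

variable {V E : Type*} (G : Multigraph V E)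

theorem Adjm.symm {G : Multigraph V E} {x y : V} (h : G.Adjm x y) : G.Adjm y x :=
  let ⟨e, he⟩ := h
  ⟨e, he.trans Sym2.eq_swap⟩

/-- In `ℕ` the supremum of an unbounded set is `0`, so a nonzero diameter bounds every distance. -/
theorem dist_le_diam (hG : G.diam ≠ 0) (x y : V) : G.dist x y ≤ G.diam := by
  have hbdd : BddAbove {n | ∃ x y, G.dist x y = n} := by
    by_contra h
    exact hG (Nat.sSup_of_not_bddAbove h)
  exact le_csSup hbdd ⟨x, y, rfl⟩

theorem distSet_le_dist {w x : V} {X : Set V} (hx : x ∈ X) : G.distSet w X ≤ G.dist w x :=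
  Nat.sInf_le ⟨x, hx, rfl⟩

theorem exists_adjm_chain_of_dist_eq_four {w b : V} (h : G.dist w b = 4) :
    ∃ i₁ i₂ i₃, G.Adjm w i₁ ∧ G.Adjm i₁ i₂ ∧ G.Adjm i₂ i₃ ∧ G.Adjm i₃ b := by
  have hreach : G.toSimple.Reachable w b :=
    SimpleGraph.Reachable.of_dist_ne_zero (show G.dist w b ≠ 0 by omega)
  obtain ⟨p, hp⟩ := hreach.exists_walk_length_eq_dist
  have hlen : p.length = 4 := hp.trans h
  have step (i : ℕ) (hi : i < 4) : G.Adjm (p.getVert i) (p.getVert (i + 1)) :=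
    (p.adj_getVert_succ (hlen ▸ hi)).2
  refine ⟨p.getVert 1, p.getVert 2, p.getVert 3, ?_, step 1 (by norm_num), step 2 (by norm_num), ?_⟩
  · simpa only [p.getVert_zero] using step 0 (by norm_num)
  · have hlast := step 3 (by norm_num)
    rwa [show 3 + 1 = p.length by omega, p.getVert_length] at hlast

end Multigraph

theorem stmt14_general {V E : Type*} (G : Multigraph V E) (hdiam : G.diam = 4) (u v : V)
    (hB : G.setB u v ≠ G.setB1 u v) :
    G.setK'1 u v = ∅ := by
  obtain ⟨b, hbB, hbB1⟩ := Set.exists_of_ssubset (Set.inter_subset_left.ssubset_of_ne hB.symm)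
  refine Set.eq_empty_of_forall_notMem fun w ⟨_, hdistB, hpath⟩ => hbB1 ?_
  have hwb : G.dist w b = 4 :=
    le_antisymm (hdiam ▸ G.dist_le_diam (by omega) w b) (hdistB ▸ G.distSet_le_dist hbB)
  obtain ⟨i₁, i₂, i₃, h₁, h₂, h₃, h₄⟩ := G.exists_adjm_chain_of_dist_eq_four hwb
  exact ⟨hbB, i₃, (hpath i₁ i₂ i₃ b hbB h₁ h₂ h₃ h₄).2.2, h₄.symm⟩

/-- **Proposition 2.** Let `G` be a bridgeless graph with `d(G) = 4` and let
`uv` be an edge with `l_G(uv) = g*(G) ≥ 6`. If `B ≠ B₁`, then `K'₁ = ∅`. -/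
theorem stmt14 {V E : Type*} [Fintype V] [Fintype E] (G : Multigraph V E)
    (hconn : G.toSimple.Connected) (hbridgeless : G.Bridgeless) (hdiam : G.diam = 4)
    (u v : V) (e : E) (he : G.ends e = s(u, v))
    (hmax : G.edgeGirth e = G.maxEdgeGirth) (h6 : 6 ≤ G.maxEdgeGirth)
    (hB : G.setB u v ≠ G.setB1 u v) :
    G.setK'1 u v = ∅ :=
  stmt14_general G hdiam u v hB
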